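/- arXiv:0804.3621 — 5 statements merged into one kernel-verified Lean document; each statement's English description precedes it below -/
import Mathlib

section
/- Let b be an ℝ-linear endomorphism of a finite dimensional real vector space W with b² = -1. Then there exist elements w₁, ..., w_m in W such that {w₁, bw₁, ..., w_m, bw_m} is a basis of W over ℝ. -/
/-! Since `b² = -1`, letting `i` act as `b` makes `W` a finite dimensional complex vector space.
If `w₁, …, w_m` is a complex basis, then `{w₁, i w₁, …, w_m, i w_m} = {w₁, b w₁, …, w_m, b w_m}`
is a real basis, because `1, i` is a real basis of `ℂ`. -/

theorem Module.exists_basis_I_smul (V : Type*) [AddCommGroup V] [Module ℂ V] [Module ℝ V]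
    [IsScalarTower ℝ ℂ V] [FiniteDimensional ℝ V] :
    ∃ (m : ℕ) (B : Module.Basis (Fin m × Fin 2) ℝ V),
      ∀ j : Fin m, B (j, 1) = Complex.I • B (j, 0) := by
  have : FiniteDimensional ℂ V := .of_restrictScalars_finite ℝ ℂ V
  refine ⟨_, Complex.basisOneI.smulTower' (Module.finBasis ℂ V), fun j => ?_⟩
  simp [Module.Basis.smulTower'_apply]

namespace Module.End

variable {W : Type*} [AddCommGroup W] [Module ℝ W]

noncomputable abbrev complexModule (b : Module.End ℝ W) (hb : b * b = -1) : Module ℂ W :=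
  Module.compHom W (Complex.lift ⟨b, hb⟩).toRingHom

theorem isScalarTower_complexModule (b : Module.End ℝ W) (hb : b * b = -1) :
    letI := complexModule b hb
    IsScalarTower ℝ ℂ W :=
  letI := complexModule b hb
  ⟨fun r z w => show Complex.lift ⟨b, hb⟩ (r • z) w = r • Complex.lift ⟨b, hb⟩ z w by
    rw [map_smul]; rfl⟩

theorem complexModule_I_smul (b : Module.End ℝ W) (hb : b * b = -1) (w : W) :
    letI := complexModule b hb
    Complex.I • w = b w :=
  congrArg (· w) (Complex.liftAux_apply_I b hb)

end Module.End

/-- If `b` is an endomorphism of a finite dimensional real vector space with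
`b² = -1`, then there is a basis of the form `{w₁, bw₁, ..., w_m, bw_m}`. -/
theorem stmt3 (W : Type*) [AddCommGroup W] [Module ℝ W] [FiniteDimensional ℝ W]
    (b : W →ₗ[ℝ] W) (hb : b ∘ₗ b = -LinearMap.id) :
    ∃ (m : ℕ) (B : Module.Basis (Fin m × Fin 2) ℝ W),
      ∀ j : Fin m, B (j, 1) = b (B (j, 0)) := by
  let := Module.End.complexModule b hb
  have := Module.End.isScalarTower_complexModule b hb
  obtain ⟨m, B, hB⟩ := Module.exists_basis_I_smul W
  exact ⟨m, B, fun j => (hB j).trans (Module.End.complexModule_I_smul b hb _)⟩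
end

section
/- Let V be an ℝ[t]-module annihilated by pⁿ (p monic irreducible), V_k = ker(pᵏ). If w₁, ..., w_s ∈ V_k are such that their images in V_k/V_{k-1} are linearly independent over the field ℝ[t]/(p), then the submodules ℝ[t]·w₁, ..., ℝ[t]·w_s form a direct sum: whenever f₁(t)w₁ + ... + f_s(t)w_s = 0 with f_i ∈ ℝ[t], each f_i(t)w_i = 0. -/
open Polynomial

/- Induction on `j`: if every `fᵢ = pʲ gᵢ`, then `pʲ • ∑ gᵢ wᵢ = 0`, hence (as `j < k`)
`p^(k-1) • ∑ gᵢ wᵢ = 0`, so `p ∣ gᵢ` by independence modulo `p`, and `p^(j+1) ∣ fᵢ`.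
Taking `j = k` gives `fᵢ wᵢ ∈ pᵏ R wᵢ = 0`. -/

section

variable {R M ι : Type*} [CommSemiring R] [AddCommMonoid M] [Module R M] [Fintype ι]
  {p : R} {k : ℕ} {w : ι → M}

theorem pow_dvd_of_sum_smul_eq_zero
    (hindep : ∀ g : ι → R, p ^ (k - 1) • ∑ i, g i • w i = 0 → ∀ i, p ∣ g i)
    {f : ι → R} (hf : ∑ i, f i • w i = 0) {j : ℕ} (hj : j ≤ k) (i : ι) :
    p ^ j ∣ f i := by
  induction j generalizing i with
  | zero => simp
  | succ j ih =>
    choose g hg using ih (Nat.le_of_succ_le hj)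
    have hpow : p ^ j • ∑ i, g i • w i = 0 := by
      simp_rw [Finset.smul_sum, smul_smul, ← hg]
      exact hf
    have hlow : p ^ (k - 1) • ∑ i, g i • w i = 0 := by
      rw [show k - 1 = (k - 1 - j) + j by omega, pow_add, mul_smul, hpow, smul_zero]
    obtain ⟨h, hh⟩ := hindep g hlow i
    exact ⟨h, by rw [hg i, hh, pow_succ, mul_assoc]⟩

theorem smul_eq_zero_of_sum_smul_eq_zero (hw : ∀ i, p ^ k • w i = 0)
    (hindep : ∀ g : ι → R, p ^ (k - 1) • ∑ i, g i • w i = 0 → ∀ i, p ∣ g i)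
    {f : ι → R} (hf : ∑ i, f i • w i = 0) (i : ι) :
    f i • w i = 0 := by
  obtain ⟨h, hh⟩ := pow_dvd_of_sum_smul_eq_zero hindep hf le_rfl i
  rw [hh, mul_comm, mul_smul, hw i, smul_zero]

end

theorem stmt8_general (V : Type*) [AddCommGroup V] [Module ℝ[X] V]
    (p : ℝ[X]) (k : ℕ)
    (s : ℕ) (w : Fin s → V) (hw : ∀ i, (p ^ k) • w i = 0)
    (hindep : ∀ f : Fin s → ℝ[X],
      (p ^ (k - 1)) • (∑ i, f i • w i) = 0 → ∀ i, p ∣ f i) :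
    ∀ f : Fin s → ℝ[X], (∑ i, f i • w i) = 0 → ∀ i, f i • w i = 0 :=
  fun _ hf => smul_eq_zero_of_sum_smul_eq_zero hw hindep hf

/-- If `w₁, ..., w_s ∈ V_k` have images in `V_k/V_{k-1}` that are linearly
independent over `ℝ[t]/(p)`, then the cyclic submodules they generate form a
direct sum: any relation `∑ fᵢ(t) wᵢ = 0` forces each `fᵢ(t) wᵢ = 0`. -/
theorem stmt8 (V : Type*) [AddCommGroup V] [Module ℝ[X] V]
    (p : ℝ[X]) (hm : p.Monic) (hirr : Irreducible p) (n : ℕ)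
    (hann : ∀ v : V, (p ^ n) • v = 0) (k : ℕ)
    (s : ℕ) (w : Fin s → V) (hw : ∀ i, (p ^ k) • w i = 0)
    (hindep : ∀ f : Fin s → ℝ[X],
      (p ^ (k - 1)) • (∑ i, f i • w i) = 0 → ∀ i, p ∣ f i) :
    ∀ f : Fin s → ℝ[X], (∑ i, f i • w i) = 0 → ∀ i, f i • w i = 0 :=
  stmt8_general V p k s w hw hindep
end

section
/- Let p = t - r with r ∈ ℝ, r ≠ 0, r ≠ ±1, and n ∈ ℕ. Define V = ℝ[t]/(pⁿ) ⊕ ℝ[t]/(p̃ⁿ) where p̃ = t - r⁻¹, with a acting as multiplication by t on each summand and b(u(t), v(t)) = (-v(t), u(t)) suitably interpreted so that ba = a⁻¹b and b² = -1. Then V is an indecomposable module over the algebra generated by a, b: V is not a direct sum of two nonzero invariant subspaces. -/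
open Polynomial

/-- `ℝ[t]/((t-r)ⁿ)`. -/
noncomputable abbrev JQuot (r : ℝ) (n : ℕ) :=
  ℝ[X] ⧸ Ideal.span ({((X - C r) ^ n : ℝ[X])} : Set ℝ[X])

/-- `a` acts by multiplication by `t` on each summand of
`V = ℝ[t]/((t-r)ⁿ) ⊕ ℝ[t]/((t-r⁻¹)ⁿ)`. -/
noncomputable def aDiag (r : ℝ) (n : ℕ) : Module.End ℝ (JQuot r n × JQuot r⁻¹ n) :=
  (LinearMap.mulLeft ℝ (Ideal.Quotient.mk _ (X : ℝ[X]))).prodMap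
    (LinearMap.mulLeft ℝ (Ideal.Quotient.mk _ (X : ℝ[X])))

/-!
Since `b` intertwines `a` with `a⁻¹` and `a⁻¹ - r⁻¹ = -r⁻¹ a⁻¹ (a - r)`, the map `b` sends the
generalized `r`-eigenspace `ℝ[t]/((t-r)ⁿ) × 0` of `a` into the generalized `r⁻¹`-eigenspace
`0 × ℝ[t]/((t-r⁻¹)ⁿ)`, and `b` is injective because `b² = -1`. An `a`-invariant subspace splits
along the two summands, so a nonzero subspace invariant under `a` and `b` meets the second summand
nontrivially. Every nonzero `a`-invariant subspace of `ℝ[t]/((t-r⁻¹)ⁿ)` contains its socle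
`(t - r⁻¹)ⁿ⁻¹`, so two such subspaces never intersect trivially.
-/

theorem Ideal.Quotient.isUnit_mk_span_singleton_of_isCoprime {R : Type*} [CommRing R]
    {f g : R} (h : IsCoprime f g) : IsUnit (Ideal.Quotient.mk (Ideal.span {g}) f) := by
  obtain ⟨u, v, huv⟩ := h
  refine .of_mul_eq_one (Ideal.Quotient.mk _ u) ?_
  rw [← map_mul, ← map_one (Ideal.Quotient.mk _), Ideal.Quotient.eq, ← huv]
  exact Ideal.mem_span_singleton.mpr ⟨-v, by ring⟩

namespace Polynomial

variable {K : Type*} [Field K] {s : K} {n : ℕ}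

theorem mk_pow_pred_ne_zero {z : K[X] ⧸ Ideal.span {(X - C s) ^ n}} (hz : z ≠ 0) :
    Ideal.Quotient.mk (Ideal.span {(X - C s) ^ n}) ((X - C s) ^ (n - 1)) ≠ 0 := by
  have hn : n ≠ 0 := by
    rintro rfl
    have : Subsingleton (K[X] ⧸ Ideal.span {(X - C s) ^ 0}) :=
      Ideal.Quotient.subsingleton_iff.mpr (by simp)
    exact hz (Subsingleton.elim _ _)
  rw [Ne, Ideal.Quotient.eq_zero_iff_mem, Ideal.mem_span_singleton,
    pow_dvd_pow_iff (X_sub_C_ne_zero s) (not_isUnit_X_sub_C s)]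
  omega

theorem exists_mul_eq_mk_pow_pred {z : K[X] ⧸ Ideal.span {(X - C s) ^ n}} (hz : z ≠ 0) :
    ∃ f : K[X], Ideal.Quotient.mk _ f * z = Ideal.Quotient.mk _ ((X - C s) ^ (n - 1)) := by
  obtain ⟨g, rfl⟩ := Ideal.Quotient.mk_surjective z
  have hg : g ≠ 0 := by rintro rfl; simp at hz
  obtain ⟨h, hgh, hsh⟩ := g.exists_eq_pow_rootMultiplicity_mul_and_not_dvd hg s
  set k := g.rootMultiplicity s
  have hk : k < n := by
    by_contra! hnk
    exact hz (Ideal.Quotient.eq_zero_iff_mem.mpr (Ideal.mem_span_singleton.mpr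
      ((pow_dvd_pow _ hnk).trans ⟨h, hgh⟩)))
  obtain ⟨c, hc⟩ := (Ideal.Quotient.isUnit_mk_span_singleton_of_isCoprime
    (((irreducible_X_sub_C s).coprime_iff_not_dvd.mpr hsh).symm.pow_right (n := n))).exists_left_inv
  obtain ⟨c, rfl⟩ := Ideal.Quotient.mk_surjective c
  refine ⟨c * (X - C s) ^ (n - 1 - k), ?_⟩
  have hpow : (X - C s) ^ (n - 1 - k) * (X - C s) ^ k = (X - C s) ^ (n - 1) := by
    rw [← pow_add]; congr 1; omega
  have : c * (X - C s) ^ (n - 1 - k) * g = (X - C s) ^ (n - 1) * (c * h) := by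
    rw [hgh, ← hpow]; ring
  rw [← map_mul, this, map_mul, map_mul, hc, mul_one]

theorem isUnit_mk_X (hs : s ≠ 0) :
    IsUnit (Ideal.Quotient.mk (Ideal.span {(X - C s) ^ n}) X) := by
  have : IsCoprime (X : K[X]) (X - C s) := by
    simpa using isCoprime_X_sub_C_of_isUnit_sub (a := 0) (sub_ne_zero.mpr hs.symm).isUnit
  exact Ideal.Quotient.isUnit_mk_span_singleton_of_isCoprime this.pow_right

end Polynomial

namespace Module.End

variable {K M : Type*} [Field K] [AddCommGroup M] [Module K M]

theorem mapsTo_genEigenspace_inv {a b : End K M} (ha : IsUnit a)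
    (hab : b * a = Ring.inverse a * b) {μ : K} (hμ : μ ≠ 0) (n : ℕ) :
    Set.MapsTo b (a.genEigenspace μ n) (a.genEigenspace μ⁻¹ n) := by
  set a' := Ring.inverse a
  have h₁ : a * a' = 1 := Ring.mul_inverse_cancel a ha
  have h₂ : a' * a = 1 := Ring.inverse_mul_cancel a ha
  have hab' : a * b = b * a' := calc
    a * b = a * (b * a) * a' := by rw [← mul_assoc a b a, mul_assoc _ a a', h₁, mul_one]
    _ = b * a' := by rw [hab, ← mul_assoc, h₁, one_mul]
  set u := (-μ⁻¹) • a'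
  have hsemi : SemiconjBy b (u * (a - μ • 1)) (a - μ⁻¹ • 1) := by
    simp only [SemiconjBy, u, mul_sub, sub_mul, smul_mul_assoc, h₂, mul_smul_comm, mul_one,
      one_mul, hab', smul_smul]
    rw [mul_neg, mul_inv_cancel₀ hμ]
    module
  have hcomm : Commute u (a - μ • 1) := by
    refine .smul_left (.sub_right ?_ (.smul_right (.one_right _) _)) _
    exact h₂.trans h₁.symm
  intro x hx
  rw [SetLike.mem_coe, mem_genEigenspace_nat, LinearMap.mem_ker] at hx ⊢
  rw [← Module.End.mul_apply, ← (hsemi.pow_right n).eq, hcomm.mul_pow, mul_apply, mul_apply, hx,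
    map_zero, map_zero]

end Module.End

section aDiag

variable {r : ℝ} {n : ℕ}

theorem aDiag_eq_prodMapAlgHom :
    aDiag r n = LinearMap.prodMapAlgHom ℝ _ _
      (Algebra.lmul ℝ _ (Ideal.Quotient.mkₐ ℝ _ X), Algebra.lmul ℝ _ (Ideal.Quotient.mkₐ ℝ _ X)) :=
  rfl

theorem aeval_aDiag_apply (f : ℝ[X]) (x : JQuot r n × JQuot r⁻¹ n) :
    aeval (aDiag r n) f x = (Ideal.Quotient.mk _ f * x.1, Ideal.Quotient.mk _ f * x.2) := by
  simp only [aDiag_eq_prodMapAlgHom, aeval_algHom_apply, aeval_prod_apply, aeval_X_left_apply]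
  rfl

theorem isUnit_aDiag (hr : r ≠ 0) : IsUnit (aDiag r n) := by
  rw [aDiag_eq_prodMapAlgHom]
  exact (Prod.isUnit_iff.mpr ⟨(isUnit_mk_X hr).map _, (isUnit_mk_X (inv_ne_zero hr)).map _⟩).map _

theorem mem_genEigenspace_aDiag_iff (μ : ℝ) (x : JQuot r n × JQuot r⁻¹ n) :
    x ∈ (aDiag r n).genEigenspace μ n ↔
      Ideal.Quotient.mk _ ((X - C μ) ^ n) * x.1 = 0 ∧
        Ideal.Quotient.mk _ ((X - C μ) ^ n) * x.2 = 0 := by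
  have : (aDiag r n - μ • 1) ^ n = aeval (aDiag r n) ((X - C μ) ^ n) := by
    simp [Algebra.algebraMap_eq_smul_one]
  rw [Module.End.mem_genEigenspace_nat, LinearMap.mem_ker, this, aeval_aDiag_apply,
    Prod.mk_eq_zero]

theorem mk_zero_snd_mem (hr : r ≠ r⁻¹) {W : Submodule ℝ (JQuot r n × JQuot r⁻¹ n)}
    (hW : W.map (aDiag r n) ≤ W) {x : JQuot r n × JQuot r⁻¹ n} (hx : x ∈ W) :
    ((0 : JQuot r n), x.2) ∈ W := by
  obtain ⟨u, v, huv⟩ := (isCoprime_X_sub_C_of_isUnit_sub (sub_ne_zero.mpr hr).isUnit).pow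
    (m := n) (n := n)
  have h₁ : Ideal.Quotient.mk (Ideal.span {(X - C r) ^ n}) (u * (X - C r) ^ n) = 0 :=
    Ideal.Quotient.eq_zero_iff_mem.mpr (Ideal.mul_mem_left _ _ (Ideal.mem_span_singleton_self _))
  have h₂ : Ideal.Quotient.mk (Ideal.span {(X - C r⁻¹) ^ n}) (u * (X - C r) ^ n) = 1 := by
    rw [← map_one (Ideal.Quotient.mk _), Ideal.Quotient.eq, ← huv]
    exact Ideal.mem_span_singleton.mpr ⟨-v, by ring⟩
  have := aeval_apply_smul_mem_of_le_comap hx (u * (X - C r) ^ n) _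
    (Submodule.map_le_iff_le_comap.mp hW)
  rwa [aeval_aDiag_apply, h₁, h₂, zero_mul, one_mul] at this

theorem exists_ne_zero_mk_zero_mem (hr₀ : r ≠ 0) (hr : r ≠ r⁻¹)
    {b : Module.End ℝ (JQuot r n × JQuot r⁻¹ n)} (hb : Function.Injective b)
    (hrel : b * aDiag r n = Ring.inverse (aDiag r n) * b)
    {W : Submodule ℝ (JQuot r n × JQuot r⁻¹ n)} (hW : W ≠ ⊥) (haW : W.map (aDiag r n) ≤ W)
    (hbW : W.map b ≤ W) : ∃ z ≠ 0, ((0 : JQuot r n), z) ∈ W := by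
  by_contra! h
  have hsnd : ∀ y ∈ W, y.2 = 0 := fun y hy ↦
    by_contra fun hy₂ ↦ h _ hy₂ (mk_zero_snd_mem hr haW hy)
  obtain ⟨x, hxW, hx₀⟩ := (Submodule.ne_bot_iff W).mp hW
  have hx : x ∈ (aDiag r n).genEigenspace r n := by
    refine (mem_genEigenspace_aDiag_iff r x).mpr ⟨?_, by rw [hsnd x hxW, mul_zero]⟩
    rw [Ideal.Quotient.eq_zero_iff_mem.mpr (Ideal.mem_span_singleton_self _), zero_mul]
  have hbx := ((mem_genEigenspace_aDiag_iff r⁻¹ (b x)).mp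
    (Module.End.mapsTo_genEigenspace_inv (isUnit_aDiag hr₀) hrel hr₀ n hx)).1
  have hbx₁ : (b x).1 = 0 := (Ideal.Quotient.isUnit_mk_span_singleton_of_isCoprime
    (isCoprime_X_sub_C_of_isUnit_sub (sub_ne_zero.mpr hr.symm).isUnit).pow).mul_right_eq_zero.mp
    hbx
  have hbx₂ : (b x).2 = 0 := hsnd _ (hbW ⟨x, hxW, rfl⟩)
  exact hx₀ ((injective_iff_map_eq_zero b).mp hb x (Prod.ext hbx₁ hbx₂))

theorem mk_zero_mk_pow_pred_mem {W : Submodule ℝ (JQuot r n × JQuot r⁻¹ n)}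
    (hW : W.map (aDiag r n) ≤ W) {z : JQuot r⁻¹ n} (hz : z ≠ 0) (hzW : ((0 : JQuot r n), z) ∈ W) :
    ((0 : JQuot r n), Ideal.Quotient.mk _ ((X - C r⁻¹) ^ (n - 1))) ∈ W := by
  obtain ⟨f, hf⟩ := exists_mul_eq_mk_pow_pred hz
  have := aeval_apply_smul_mem_of_le_comap hzW f _ (Submodule.map_le_iff_le_comap.mp hW)
  rwa [aeval_aDiag_apply, mul_zero, hf] at this

end aDiag

theorem stmt11_general (r : ℝ) (hr0 : r ≠ 0) (hr1 : r ≠ 1) (hrm1 : r ≠ -1)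
    (n : ℕ)
    (b : Module.End ℝ (JQuot r n × JQuot r⁻¹ n))
    (hb2 : b * b = -1)
    (hrel : b * aDiag r n = Ring.inverse (aDiag r n) * b) :
    ¬ ∃ W₁ W₂ : Submodule ℝ (JQuot r n × JQuot r⁻¹ n),
      W₁ ≠ ⊥ ∧ W₂ ≠ ⊥ ∧
      Submodule.map (aDiag r n) W₁ ≤ W₁ ∧ Submodule.map b W₁ ≤ W₁ ∧
      Submodule.map (aDiag r n) W₂ ≤ W₂ ∧ Submodule.map b W₂ ≤ W₂ ∧
      W₁ ⊓ W₂ = ⊥ ∧ W₁ ⊔ W₂ = ⊤ := by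
  rintro ⟨W₁, W₂, hW₁, hW₂, ha₁, hb₁, ha₂, hb₂, hinf, -⟩
  have hr : r ≠ r⁻¹ := fun h ↦
    (mul_self_eq_one_iff.mp (by rw [← mul_inv_cancel₀ hr0, ← h])).elim hr1 hrm1
  have hb : Function.Injective b := Function.LeftInverse.injective (g := -b) fun x ↦ by
    rw [LinearMap.neg_apply, ← Module.End.mul_apply, hb2]; simp
  obtain ⟨z₁, hz₁, hzW₁⟩ := exists_ne_zero_mk_zero_mem hr0 hr hb hrel hW₁ ha₁ hb₁
  obtain ⟨z₂, hz₂, hzW₂⟩ := exists_ne_zero_mk_zero_mem hr0 hr hb hrel hW₂ ha₂ hb₂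
  have hσ := Submodule.mem_inf.mpr
    ⟨mk_zero_mk_pow_pred_mem ha₁ hz₁ hzW₁, mk_zero_mk_pow_pred_mem ha₂ hz₂ hzW₂⟩
  rw [hinf, Submodule.mem_bot, Prod.mk_eq_zero] at hσ
  exact mk_pow_pred_ne_zero hz₁ hσ.2

/-- Let `p = t - r` with `r ∉ {0, 1, -1}` and `p̃ = t - r⁻¹`, and let
`V = ℝ[t]/(pⁿ) ⊕ ℝ[t]/(p̃ⁿ)` with `a` acting by multiplication by `t` on each
summand. For any `b` interpreted so that `ba = a⁻¹b` and `b² = -1`, the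
resulting module is indecomposable: `V` is not the direct sum of two nonzero
subspaces invariant under both `a` and `b`. -/
theorem stmt11 (r : ℝ) (hr0 : r ≠ 0) (hr1 : r ≠ 1) (hrm1 : r ≠ -1)
    (n : ℕ) (hn : 0 < n)
    (b : Module.End ℝ (JQuot r n × JQuot r⁻¹ n))
    (hb2 : b * b = -1)
    (hrel : b * aDiag r n = Ring.inverse (aDiag r n) * b) :
    ¬ ∃ W₁ W₂ : Submodule ℝ (JQuot r n × JQuot r⁻¹ n),
      W₁ ≠ ⊥ ∧ W₂ ≠ ⊥ ∧
      Submodule.map (aDiag r n) W₁ ≤ W₁ ∧ Submodule.map b W₁ ≤ W₁ ∧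
      Submodule.map (aDiag r n) W₂ ≤ W₂ ∧ Submodule.map b W₂ ≤ W₂ ∧
      W₁ ⊓ W₂ = ⊥ ∧ W₁ ⊔ W₂ = ⊤ :=
  stmt11_general r hr0 hr1 hrm1 n b hb2 hrel
end

section
/- Let V be a finite dimensional real vector space with endomorphisms a (invertible) and b satisfying ba = a⁻¹b, b² = -1, and (a - r)ⁿ = 0 for r = ±1. Then there exist w₁,...,w_m ∈ V and exponents n₁,...,n_m such that V decomposes as a direct sum of the ℝ-subspaces spanned by {(a-r)ⁱ w_j, (a-r)ⁱ b w_j : 0 ≤ i < n_j}, each summand being invariant under both a and b. -/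
set_option maxHeartbeats 1000000

open Module Submodule

universe u

/-- The conclusion of the theorem, as a reusable predicate. -/
def Concl (V : Type u) [AddCommGroup V] [Module ℝ V]
    (a b : Module.End ℝ V) (r : ℝ) : Prop :=
  ∃ (m : ℕ) (w : Fin m → V) (nj : Fin m → ℕ) (S : Fin m → Submodule ℝ V),
    (∀ j : Fin m, S j = Submodule.span ℝ
      {x : V | ∃ i < nj j,
        x = ((a - r • 1) ^ i) (w j) ∨ x = ((a - r • 1) ^ i) (b (w j))}) ∧
    (∀ j : Fin m, Submodule.map a (S j) ≤ S j ∧ Submodule.map b (S j) ≤ S j) ∧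
    DirectSum.IsInternal S

lemma concl_trivial (V : Type u) [AddCommGroup V] [Module ℝ V] [Subsingleton V]
    (a b : Module.End ℝ V) (r : ℝ) : Concl V a b r := by
  refine ⟨0, Fin.elim0, Fin.elim0, Fin.elim0, fun j => j.elim0, fun j => j.elim0, ?_⟩
  rw [DirectSum.isInternal_submodule_iff_iSupIndep_and_iSup_eq_top]
  constructor
  · intro j; exact j.elim0
  · refine eq_top_iff.mpr fun x _ => ?_
    rw [Subsingleton.elim x 0]
    exact zero_mem _

/-- an invariant subspace of a finite-dimensional space is invariant under the inverse. -/
lemma map_inv_mem {V : Type u} [AddCommGroup V] [Module ℝ V] [FiniteDimensional ℝ V]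
    (a a' : Module.End ℝ V) (h1 : a * a' = 1) (h2 : a' * a = 1)
    (X : Submodule ℝ V) (hX : ∀ x ∈ X, a x ∈ X) : ∀ x ∈ X, a' x ∈ X := by
  have hcomp : ∀ v : V, a' (a v) = v := by
    intro v
    have : (a' * a) v = (1 : Module.End ℝ V) v := by rw [h2]
    simpa [Module.End.mul_apply] using this
  have hinj : Function.Injective a := Function.LeftInverse.injective hcomp
  have hmap : Submodule.map a X = X := by
    apply Submodule.eq_of_le_of_finrank_le
    · rintro x ⟨y, hy, rfl⟩
      exact hX y hy
    · exact le_of_eq (Submodule.equivMapOfInjective a hinj X).finrank_eq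
  intro x hx
  rw [← hmap] at hx
  obtain ⟨y, hy, rfl⟩ := hx
  rw [hcomp]
  exact hy

lemma pow_mem_of_mem {V : Type u} [AddCommGroup V] [Module ℝ V]
    (f : Module.End ℝ V) (X : Submodule ℝ V) (hf : ∀ x ∈ X, f x ∈ X) :
    ∀ (i : ℕ) (x : V), x ∈ X → (f ^ i) x ∈ X := by
  intro i
  induction i with
  | zero => intro x hx; simpa using hx
  | succ i ih =>
    intro x hx
    rw [pow_succ, Module.End.mul_apply]
    exact ih _ (hf x hx)

lemma restrict_pow_coe {V : Type u} [AddCommGroup V] [Module ℝ V]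
    (f : Module.End ℝ V) (X : Submodule ℝ V) (hf : ∀ x ∈ X, f x ∈ X) (i : ℕ) (x : X) :
    ((((LinearMap.restrict f hf) ^ i) x : X) : V) = (f ^ i) (x : V) := by
  induction i generalizing x with
  | zero => simp
  | succ i ih =>
    rw [pow_succ, pow_succ, Module.End.mul_apply, Module.End.mul_apply, ih,
      LinearMap.restrict_coe_apply]

theorem aux (k : ℕ) : ∀ (V : Type u) [AddCommGroup V] [Module ℝ V] [FiniteDimensional ℝ V]
    (a b : Module.End ℝ V),
    (∃ a' : Module.End ℝ V, a * a' = 1 ∧ a' * a = 1 ∧ b * a = a' * b) →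
    (b * b = -1) → ∀ (r : ℝ), (r = 1 ∨ r = -1) → ∀ (n : ℕ),
    ((a - r • 1) ^ n = 0) → (finrank ℝ V ≤ k) → Concl V a b r := by
  induction k with
  | zero =>
    intro V _ _ _ a b _ _ r _ n _ hk
    have : Subsingleton V := by
      rw [← finrank_zero_iff (R := ℝ)]
      omega
    exact concl_trivial V a b r
  | succ k ih =>
    intro V _ _ _ a b hrel hb r hr n hann hk
    classical
    rcases subsingleton_or_nontrivial V with hV | hV
    · exact concl_trivial V a b r
    obtain ⟨a', ha1, ha2, hba⟩ := hrel
    set N : Module.End ℝ V := a - r • 1 with hNdef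
    -- pointwise basics
    have hr2 : r * r = 1 := by rcases hr with h | h <;> rw [h] <;> norm_num
    have h1v : ∀ v : V, a (a' v) = v := by
      intro v
      have : (a * a') v = (1 : Module.End ℝ V) v := by rw [ha1]
      simpa [Module.End.mul_apply] using this
    have h2v : ∀ v : V, a' (a v) = v := by
      intro v
      have : (a' * a) v = (1 : Module.End ℝ V) v := by rw [ha2]
      simpa [Module.End.mul_apply] using this
    have hbav : ∀ v : V, b (a v) = a' (b v) := by
      intro v
      have : (b * a) v = (a' * b) v := by rw [hba]
      simpa [Module.End.mul_apply] using this
    have hbbv : ∀ v : V, b (b v) = -v := by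
      intro v
      have : (b * b) v = (-1 : Module.End ℝ V) v := by rw [hb]
      simpa [Module.End.mul_apply] using this
    have hNapp : ∀ v : V, N v = a v - r • v := by
      intro v; simp [hNdef]
    have hps : ∀ (f : Module.End ℝ V) (i : ℕ) (x : V), (f ^ (i + 1)) x = (f ^ i) (f x) := by
      intro f i x; rw [pow_succ, Module.End.mul_apply]
    have hps' : ∀ (f : Module.End ℝ V) (i : ℕ) (x : V), (f ^ (i + 1)) x = f ((f ^ i) x) := by
      intro f i x; rw [pow_succ', Module.End.mul_apply]
    -- d' + 1 = nilpotency degree of N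
    have hexd : ∃ kk, N ^ kk = 0 := ⟨n, hann⟩
    have hd0 : Nat.find hexd ≠ 0 := by
      intro h0
      have hsp := Nat.find_spec hexd
      rw [h0, pow_zero] at hsp
      obtain ⟨v, hv⟩ := exists_ne (0 : V)
      apply hv
      calc v = (1 : Module.End ℝ V) v := by simp
        _ = (0 : Module.End ℝ V) v := by rw [hsp]
        _ = 0 := by simp
    obtain ⟨d', hdd⟩ : ∃ d', Nat.find hexd = d' + 1 :=
      ⟨Nat.find hexd - 1, (Nat.succ_pred_eq_of_pos (Nat.pos_of_ne_zero hd0)).symm⟩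
    have hNd : N ^ (d' + 1) = 0 := hdd ▸ Nat.find_spec hexd
    have hNd' : N ^ d' ≠ 0 := Nat.find_min hexd (by omega)
    obtain ⟨w, hw⟩ : ∃ w : V, (N ^ d') w ≠ 0 := by
      by_contra hcon
      push_neg at hcon
      exact hNd' (LinearMap.ext fun v => by simpa using hcon v)
    have hNge : ∀ m, d' + 1 ≤ m → N ^ m = 0 := by
      intro m hm
      have : N ^ m = N ^ (m - (d' + 1)) * N ^ (d' + 1) := by
        rw [← pow_add]
        congr 1
        omega
      rw [this, hNd, mul_zero]
    have hNdz : ∀ x : V, (N ^ d') (N x) = 0 := by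
      intro x
      rw [← hps, hNd]
      simp
    -- key commutation identities (pointwise)
    have hNa'v : ∀ v : V, a' (N v) = N (a' v) := by
      intro v
      rw [hNapp, hNapp, map_sub, map_smul, h2v, h1v]
    have hNa'pow : ∀ (i : ℕ) (v : V), (a' ^ i) (N v) = N ((a' ^ i) v) := by
      intro i
      induction i with
      | zero => intro v; simp
      | succ i ihh => intro v; rw [hps', hps', ihh, hNa'v]
    have hbN1 : ∀ v : V, b (N v) = (-r) • (N (a' (b v))) := by
      intro v
      have e1 : b (N v) = a' (b v) - r • (b v) := by
        rw [hNapp, map_sub, map_smul, hbav]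
      have e2 : N (a' (b v)) = b v - r • (a' (b v)) := by
        rw [hNapp, h1v]
      rw [e1, e2, smul_sub, smul_smul, neg_mul, hr2]
      module
    have hbNpow : ∀ (i : ℕ) (v : V), b ((N ^ i) v) = ((-r) ^ i) • ((N ^ i) ((a' ^ i) (b v))) := by
      intro i
      induction i with
      | zero => intro v; simp
      | succ i ihh =>
        intro v
        rw [hps, ihh (N v), hbN1, map_smul, map_smul, smul_smul, hNa'pow, ← hps, ← hps,
          ← pow_succ]
    have hNda' : ∀ v : V, (N ^ d') (a' v) = r • (N ^ d') v := by
      intro v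
      have e1 : a' v = r • v - r • (N (a' v)) := by
        rw [hNapp, h1v, smul_sub, smul_smul, hr2]
        module
      calc (N ^ d') (a' v) = r • (N ^ d') v - r • (N ^ d') (N (a' v)) := by
            rw [← map_smul, ← map_smul, ← map_sub, ← e1]
        _ = r • (N ^ d') v := by rw [hNdz]; simp
    have hNda'pow : ∀ (i : ℕ) (v : V), (N ^ d') ((a' ^ i) v) = (r ^ i) • (N ^ d') v := by
      intro i
      induction i with
      | zero => intro v; simp
      | succ i ihh =>
        intro v
        rw [hps, ihh (a' v), hNda', smul_smul, ← pow_succ]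
    have hsoc : ∀ v : V, b ((N ^ d') v) = ((-1 : ℝ) ^ d') • ((N ^ d') (b v)) := by
      intro v
      rw [hbNpow d' v, hNda'pow, smul_smul, ← mul_pow]
      congr 2
      rw [neg_mul, hr2]
    -- socle independence
    have hL4 : ∀ α β : ℝ, α • ((N ^ d') w) + β • ((N ^ d') (b w)) = 0 → α = 0 ∧ β = 0 := by
      intro α β h
      have h2 : α • ((N ^ d') (b w)) - β • ((N ^ d') w) = 0 := by
        have hb0 := congrArg b h
        rw [map_add, map_smul, map_smul, hsoc, hsoc, map_zero, hbbv, map_neg] at hb0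
        have : ((-1 : ℝ) ^ d') • (α • ((N ^ d') (b w)) - β • ((N ^ d') w)) = 0 := by
          rw [smul_sub, smul_comm ((-1:ℝ)^d') α, smul_comm ((-1:ℝ)^d') β]
          rw [← hb0]
          module
        rcases smul_eq_zero.mp this with hc | hc
        · exact absurd hc (pow_ne_zero _ (by norm_num))
        · exact hc
      have hkey : (α * α + β * β) • ((N ^ d') w) = 0 := by
        have e1 : α • ((N ^ d') w) = -(β • ((N ^ d') (b w))) := by
          rw [eq_neg_iff_add_eq_zero]; exact h
        have e2 : β • ((N ^ d') w) = α • ((N ^ d') (b w)) := by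
          rw [eq_comm, ← sub_eq_zero]
          rw [← h2]
        have : (α * α + β * β) • ((N ^ d') w)
            = α • (α • ((N ^ d') w)) + β • (β • ((N ^ d') w)) := by module
        rw [this, e1, e2, smul_neg, smul_smul, smul_smul, mul_comm β α]
        simp
      have hss : α * α + β * β = 0 := by
        by_contra hne
        exact hw (by
          have := congrArg (fun x => (α * α + β * β)⁻¹ • x) hkey
          simpa [smul_smul, inv_mul_cancel₀ hne] using this)
      constructor <;> nlinarith [sq_nonneg α, sq_nonneg β]
    -- the first block W
    set W : Submodule ℝ V := Submodule.span ℝ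
      {x : V | ∃ i < d' + 1, x = (N ^ i) w ∨ x = (N ^ i) (b w)} with hWdef
    have hWg1 : ∀ i ≤ d', (N ^ i) w ∈ W := fun i hi =>
      Submodule.subset_span ⟨i, by omega, Or.inl rfl⟩
    have hWg2 : ∀ i ≤ d', (N ^ i) (b w) ∈ W := fun i hi =>
      Submodule.subset_span ⟨i, by omega, Or.inr rfl⟩
    have hwW : w ∈ W := by simpa using hWg1 0 (by omega)
    have hbwW : b w ∈ W := by simpa using hWg2 0 (by omega)
    have hNW : ∀ x ∈ W, N x ∈ W := by
      intro x hx
      induction hx using Submodule.span_induction with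
      | mem x hx =>
        obtain ⟨i, hi, hx | hx⟩ := hx <;> subst hx <;> rw [← hps']
        · rcases Nat.lt_or_ge (i + 1) (d' + 1) with h | h
          · exact hWg1 _ (by omega)
          · rw [hNge _ (by omega)]; simp
        · rcases Nat.lt_or_ge (i + 1) (d' + 1) with h | h
          · exact hWg2 _ (by omega)
          · rw [hNge _ (by omega)]; simp
      | zero => simp
      | add x y _ _ ihx ihy => rw [map_add]; exact add_mem ihx ihy
      | smul c x _ ihx => rw [map_smul]; exact smul_mem _ _ ihx
    have haW : ∀ x ∈ W, a x ∈ W := by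
      intro x hx
      have : a x = N x + r • x := by rw [hNapp]; module
      rw [this]
      exact add_mem (hNW x hx) (smul_mem _ _ hx)
    have ha'W : ∀ x ∈ W, a' x ∈ W := map_inv_mem a a' ha1 ha2 W haW
    have hbW : ∀ x ∈ W, b x ∈ W := by
      intro x hx
      induction hx using Submodule.span_induction with
      | mem x hx =>
        obtain ⟨i, hi, hx | hx⟩ := hx <;> subst hx <;> rw [hbNpow]
        · exact smul_mem _ _ (pow_mem_of_mem N W hNW i _
            (pow_mem_of_mem a' W ha'W i _ hbwW))
        · refine smul_mem _ _ (pow_mem_of_mem N W hNW i _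
            (pow_mem_of_mem a' W ha'W i _ ?_))
          rw [hbbv, ← neg_one_smul ℝ w]
          exact smul_mem _ _ hwW
      | zero => simp
      | add x y _ _ ihx ihy => rw [map_add]; exact add_mem ihx ihy
      | smul c x _ ihx => rw [map_smul]; exact smul_mem _ _ ihx
    -- maximal complement candidate
    set P : Submodule ℝ V → Prop :=
      fun X => (∀ x ∈ X, a x ∈ X) ∧ (∀ x ∈ X, b x ∈ X) ∧ W ⊓ X = ⊥ with hPdef
    set s : Set ℕ := {kk | ∃ X : Submodule ℝ V, P X ∧ finrank ℝ X = kk} with hsdef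
    have hs0 : (0 : ℕ) ∈ s :=
      ⟨⊥, ⟨fun x hx => by simp at hx; simp [hx], fun x hx => by simp at hx; simp [hx],
        inf_bot_eq W⟩, finrank_bot ℝ V⟩
    have hsbdd : BddAbove s := by
      refine ⟨finrank ℝ V, ?_⟩
      rintro kk ⟨X, _, rfl⟩
      exact Submodule.finrank_le X
    obtain ⟨U, hPU, hUrank⟩ := Nat.sSup_mem ⟨0, hs0⟩ hsbdd
    have hUmax : ∀ X : Submodule ℝ V, P X → finrank ℝ X ≤ finrank ℝ U := by
      intro X hX
      rw [hUrank]
      exact le_csSup hsbdd ⟨X, hX, rfl⟩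
    obtain ⟨haU, hbU, hWU⟩ := hPU
    have hNU : ∀ x ∈ U, N x ∈ U := by
      intro x hx
      rw [hNapp]
      exact sub_mem (haU x hx) (smul_mem _ _ hx)
    have ha'U : ∀ x ∈ U, a' x ∈ U := map_inv_mem a a' ha1 ha2 U haU
    -- W ⊔ U = ⊤
    have hTop : W ⊔ U = ⊤ := by
      by_contra hne
      obtain ⟨v, hv⟩ : ∃ v : V, v ∉ W ⊔ U := by
        by_contra hcon
        push_neg at hcon
        exact hne (Submodule.eq_top_iff'.mpr hcon)
      set T : Submodule ℝ V := W ⊔ U with hTdef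
      have hNT : ∀ x ∈ T, N x ∈ T := by
        intro x hx
        obtain ⟨xw, hxw, xu, hxu, rfl⟩ := Submodule.mem_sup.mp hx
        rw [map_add]
        exact add_mem (Submodule.mem_sup_left (hNW xw hxw)) (Submodule.mem_sup_right (hNU xu hxu))
      have hkex : ∃ kk, (N ^ kk) v ∈ T := ⟨d' + 1, by rw [hNd]; simp⟩
      have hkpos : Nat.find hkex ≠ 0 := by
        intro h0
        have := Nat.find_spec hkex
        rw [h0, pow_zero] at this
        simp at this
        exact hv this
      obtain ⟨km, hkm⟩ : ∃ km, Nat.find hkex = km + 1 :=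
        ⟨Nat.find hkex - 1, (Nat.succ_pred_eq_of_pos (Nat.pos_of_ne_zero hkpos)).symm⟩
      set v₁ : V := (N ^ km) v with hv₁def
      have hv₁T : v₁ ∉ T := Nat.find_min hkex (by omega)
      have hNv₁T : N v₁ ∈ T := by
        have := Nat.find_spec hkex
        rw [hkm] at this
        rw [hv₁def, ← hps']
        exact this
      obtain ⟨zw, hzw, zu, hzu, hzdec⟩ := Submodule.mem_sup.mp hNv₁T
      -- decompose zw in terms of generators
      have hWeq : W = Submodule.span ℝ (Set.range fun i : Fin (d' + 1) => (N ^ (i : ℕ)) w)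
          ⊔ Submodule.span ℝ (Set.range fun i : Fin (d' + 1) => (N ^ (i : ℕ)) (b w)) := by
        rw [hWdef, ← Submodule.span_union]
        congr 1
        ext x
        constructor
        · rintro ⟨i, hi, hx | hx⟩
          · exact Or.inl ⟨⟨i, hi⟩, hx.symm⟩
          · exact Or.inr ⟨⟨i, hi⟩, hx.symm⟩
        · rintro (⟨i, rfl⟩ | ⟨i, rfl⟩)
          · exact ⟨i, i.isLt, Or.inl rfl⟩
          · exact ⟨i, i.isLt, Or.inr rfl⟩
      obtain ⟨z1, hz1, z2, hz2, hz12⟩ := Submodule.mem_sup.mp (hWeq ▸ hzw)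
      obtain ⟨α, hα⟩ := mem_span_range_iff_exists_fun ℝ |>.mp hz1
      obtain ⟨β, hβ⟩ := mem_span_range_iff_exists_fun ℝ |>.mp hz2
      have hsum : ∀ (γ : Fin (d' + 1) → ℝ) (x : V),
          (N ^ d') (∑ i, γ i • (N ^ (i : ℕ)) x) = γ 0 • (N ^ d') x := by
        intro γ x
        rw [map_sum]
        rw [Finset.sum_eq_single (0 : Fin (d' + 1))]
        · simp
        · intro i _ hi
          have hiv : (1 : ℕ) ≤ (i : ℕ) := by
            rcases Nat.eq_zero_or_pos (i : ℕ) with h | h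
            · exact absurd (Fin.ext h : i = 0) hi
            · omega
          have : (N ^ d') ((N ^ (i : ℕ)) x) = (N ^ (d' + (i : ℕ))) x := by
            rw [← Module.End.mul_apply, ← pow_add]
          rw [map_smul, this, hNge _ (by omega)]
          simp
        · simp
      -- the lowest coefficients vanish
      have hz0 : α 0 • ((N ^ d') w) + β 0 • ((N ^ d') (b w)) = 0 ∧
          α 0 = 0 ∧ β 0 = 0 := by
        have hzero : (N ^ d') (N v₁) = 0 := hNdz v₁
        have hexp : (N ^ d') (N v₁) = α 0 • ((N ^ d') w) + β 0 • ((N ^ d') (b w)) + (N ^ d') zu := by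
          rw [← hzdec, map_add, ← hz12, map_add, ← hα, ← hβ, hsum, hsum]
        have hmem : α 0 • ((N ^ d') w) + β 0 • ((N ^ d') (b w)) ∈ W ⊓ U := by
          constructor
          · exact add_mem (smul_mem _ _ (hWg1 d' le_rfl)) (smul_mem _ _ (hWg2 d' le_rfl))
          · have : α 0 • ((N ^ d') w) + β 0 • ((N ^ d') (b w)) = -((N ^ d') zu) := by
              rw [eq_neg_iff_add_eq_zero, ← hexp, hzero]
            rw [this]
            exact neg_mem (pow_mem_of_mem N U hNU d' zu hzu)
        rw [hWU] at hmem
        have h0 : α 0 • ((N ^ d') w) + β 0 • ((N ^ d') (b w)) = 0 := by simpa using hmem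
        exact ⟨h0, hL4 _ _ h0⟩
      obtain ⟨-, hα0, hβ0⟩ := hz0
      -- pull back one power of N
      set y1 : V := ∑ i : Fin (d' + 1), α i • (N ^ ((i : ℕ) - 1)) w with hy1def
      set y2 : V := ∑ i : Fin (d' + 1), β i • (N ^ ((i : ℕ) - 1)) (b w) with hy2def
      have hy1W : y1 ∈ W := by
        apply Submodule.sum_mem
        intro i _
        exact smul_mem _ _ (hWg1 _ (by have := i.isLt; omega))
      have hy2W : y2 ∈ W := by
        apply Submodule.sum_mem
        intro i _
        exact smul_mem _ _ (hWg2 _ (by have := i.isLt; omega))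
      have hNy : ∀ (γ : Fin (d' + 1) → ℝ) (x : V), γ 0 = 0 →
          N (∑ i : Fin (d' + 1), γ i • (N ^ ((i : ℕ) - 1)) x)
            = ∑ i : Fin (d' + 1), γ i • (N ^ (i : ℕ)) x := by
        intro γ x hγ0
        rw [map_sum]
        apply Finset.sum_congr rfl
        intro i _
        rcases eq_or_ne i 0 with h | h
        · subst h; rw [hγ0]; simp
        · have hiv : (1 : ℕ) ≤ (i : ℕ) := by
            rcases Nat.eq_zero_or_pos (i : ℕ) with h' | h'
            · exact absurd (Fin.ext h' : i = 0) h
            · omega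
          rw [map_smul, ← hps', Nat.sub_add_cancel hiv]
      have hNy1 : N y1 = z1 := by rw [hy1def, hNy α w hα0, hα]
      have hNy2 : N y2 = z2 := by rw [hy2def, hNy β (b w) hβ0, hβ]
      set v' : V := v₁ - y1 - y2 with hv'def
      have hv'T : v' ∉ T := by
        intro hcon
        apply hv₁T
        have : v₁ = v' + y1 + y2 := by rw [hv'def]; module
        rw [this]
        exact add_mem (add_mem hcon (Submodule.mem_sup_left hy1W)) (Submodule.mem_sup_left hy2W)
      have hNv' : N v' = zu := by
        rw [hv'def, map_sub, map_sub, hNy1, hNy2, ← hzdec, ← hz12]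
        module
      -- the enlarged subspace U'
      set U' : Submodule ℝ V := U ⊔ (Submodule.span ℝ {v'} ⊔ Submodule.span ℝ {b v'}) with hU'def
      have hUle : U ≤ U' := le_sup_left
      have hv'U' : v' ∈ U' :=
        Submodule.mem_sup_right (Submodule.mem_sup_left (Submodule.mem_span_singleton_self v'))
      have hbv'U' : b v' ∈ U' :=
        Submodule.mem_sup_right (Submodule.mem_sup_right (Submodule.mem_span_singleton_self (b v')))
      have hmemU' : ∀ x ∈ U', ∃ u ∈ U, ∃ st : ℝ × ℝ, x = u + st.1 • v' + st.2 • (b v') := by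
        intro x hx
        obtain ⟨u, hu, z, hz, rfl⟩ := Submodule.mem_sup.mp hx
        obtain ⟨z1', hz1', z2', hz2', rfl⟩ := Submodule.mem_sup.mp hz
        obtain ⟨st1, rfl⟩ := Submodule.mem_span_singleton.mp hz1'
        obtain ⟨st2, rfl⟩ := Submodule.mem_span_singleton.mp hz2'
        exact ⟨u, hu, (st1, st2), by module⟩
      have hav' : a v' = zu + r • v' := by
        rw [hNapp] at hNv'
        rw [← hNv']
        module
      have ha'v' : a' v' = r • v' - r • (a' zu) := by
        have h1 : v' = a' zu + r • (a' v') := by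
          have := congrArg a' hav'
          rw [h2v, map_add, map_smul] at this
          exact this
        have := congrArg (fun x => r • x) h1
        simp only [smul_add, smul_smul, hr2, one_smul] at this
        rw [eq_sub_iff_add_eq, eq_comm]
        rw [this]
        module
      have hPU' : P U' := by
        refine ⟨?_, ?_, ?_⟩
        · -- a-invariance
          intro x hx
          obtain ⟨u, hu, ⟨st1, st2⟩, rfl⟩ := hmemU' x hx
          rw [map_add, map_add, map_smul, map_smul]
          refine add_mem (add_mem (hUle (haU u hu)) ?_) ?_
          · rw [hav']
            exact smul_mem _ _ (add_mem (hUle hzu) (smul_mem _ _ hv'U'))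
          · have habv' : a (b v') = b (a' v') := by
              have : (a * b) v' = (b * a') v' := by
                rw [show a * b = b * a' by
                  calc a * b = a * b * (a * a') := by rw [ha1, mul_one]
                    _ = a * (b * a) * a' := by noncomm_ring
                    _ = a * (a' * b) * a' := by rw [hba]
                    _ = (a * a') * (b * a') := by noncomm_ring
                    _ = b * a' := by rw [ha1, one_mul]]
              simpa [Module.End.mul_apply] using this
            rw [habv', ha'v', map_sub, map_smul, map_smul]
            refine smul_mem _ _ (sub_mem (smul_mem _ _ hbv'U') (smul_mem _ _ ?_))
            exact hUle (hbU _ (ha'U zu hzu))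
        · -- b-invariance
          intro x hx
          obtain ⟨u, hu, ⟨st1, st2⟩, rfl⟩ := hmemU' x hx
          rw [map_add, map_add, map_smul, map_smul, hbbv]
          refine add_mem (add_mem (hUle (hbU u hu)) (smul_mem _ _ hbv'U')) ?_
          rw [← neg_one_smul ℝ v', smul_smul]
          exact smul_mem _ _ hv'U'
        · -- disjointness from W
          rw [eq_bot_iff]
          rintro x ⟨hxW, hxU'⟩
          obtain ⟨u, hu, ⟨st1, st2⟩, rfl⟩ := hmemU' x hxU'
          set z := u + st1 • v' + st2 • (b v') with hzdef'
          have hbz : b z = b u + st1 • (b v') + (-st2) • v' := by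
            rw [hzdef', map_add, map_add, map_smul, map_smul, hbbv]
            module
          have hcomb : (st1 * st1 + st2 * st2) • v'
              = (st1 • z - st2 • (b z)) - (st1 • u - st2 • (b u)) := by
            rw [hbz, hzdef']
            module
          have hWmem : st1 • z - st2 • (b z) ∈ W :=
            sub_mem (smul_mem _ _ hxW) (smul_mem _ _ (hbW z hxW))
          have hUmem : st1 • u - st2 • (b u) ∈ U :=
            sub_mem (smul_mem _ _ hu) (smul_mem _ _ (hbU u hu))
          have hTmem : (st1 * st1 + st2 * st2) • v' ∈ T := by
            rw [hcomb]
            exact sub_mem (Submodule.mem_sup_left hWmem) (Submodule.mem_sup_right hUmem)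
          have hst : st1 = 0 ∧ st2 = 0 := by
            by_contra hcon
            have hne' : st1 * st1 + st2 * st2 ≠ 0 := by
              intro h0
              exact hcon ⟨by nlinarith [sq_nonneg st1, sq_nonneg st2],
                by nlinarith [sq_nonneg st1, sq_nonneg st2]⟩
            apply hv'T
            have : v' = (st1 * st1 + st2 * st2)⁻¹ • ((st1 * st1 + st2 * st2) • v') := by
              rw [smul_smul, inv_mul_cancel₀ hne', one_smul]
            rw [this]
            exact smul_mem _ _ hTmem
          obtain ⟨h1', h2'⟩ := hst
          subst h1'; subst h2'
          simp only [zero_smul, add_zero] at hzdef' ⊢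
          have : z ∈ W ⊓ U := ⟨hxW, by rw [hzdef']; exact hu⟩
          rw [hWU] at this
          simpa [hzdef'] using this
      -- contradiction with maximality
      have hlt : U < U' := by
        refine lt_of_le_of_ne hUle ?_
        intro heq
        exact hv'T (Submodule.mem_sup_right (heq ▸ hv'U'))
      have := hUmax U' hPU'
      have := Submodule.finrank_lt_finrank_of_lt hlt
      omega
    -- restrict everything to U and apply the induction hypothesis
    have haU' := haU
    set aU : Module.End ℝ U := LinearMap.restrict a haU with haUdef
    set bU : Module.End ℝ U := LinearMap.restrict b hbU with hbUdef
    set a'U : Module.End ℝ U := LinearMap.restrict a' ha'U with ha'Udef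
    have haUc : ∀ x : U, ((aU x : U) : V) = a (x : V) := fun x => by
      rw [haUdef]; exact LinearMap.restrict_coe_apply _ _ _
    have ha'Uc : ∀ x : U, ((a'U x : U) : V) = a' (x : V) := fun x => by
      rw [ha'Udef]; exact LinearMap.restrict_coe_apply _ _ _
    have hbUc : ∀ x : U, ((bU x : U) : V) = b (x : V) := fun x => by
      rw [hbUdef]; exact LinearMap.restrict_coe_apply _ _ _
    have hrelU : aU * a'U = 1 ∧ a'U * aU = 1 ∧ bU * aU = a'U * bU := by
      refine ⟨?_, ?_, ?_⟩ <;> ext x <;>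
        simp only [Module.End.mul_apply, Module.End.one_apply, haUc, ha'Uc, hbUc]
      · exact h1v (x : V)
      · exact h2v (x : V)
      · exact hbav (x : V)
    have hbbU : bU * bU = -1 := by
      ext x
      simp only [Module.End.mul_apply, hbUc, LinearMap.neg_apply, Module.End.one_apply,
        Submodule.coe_neg]
      exact hbbv (x : V)
    have hNUeq : aU - r • 1 = LinearMap.restrict N hNU := by
      ext x
      simp only [LinearMap.sub_apply, LinearMap.smul_apply, Module.End.one_apply,
        Submodule.coe_sub, SetLike.val_smul, haUc, LinearMap.restrict_coe_apply]
      exact (hNapp (x : V)).symm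
    have hannU : (aU - r • 1) ^ n = 0 := by
      rw [hNUeq]
      ext x
      rw [restrict_pow_coe]
      have : (N ^ n) (x : V) = (0 : Module.End ℝ V) (x : V) := by rw [hann]
      simpa using this
    have hrankU : finrank ℝ U ≤ k := by
      have hWpos : 0 < finrank ℝ W := by
        have hwne : w ≠ 0 := by
          intro h0
          apply hw
          rw [h0, map_zero]
        have : Nontrivial W :=
          ⟨⟨⟨w, hwW⟩, 0, fun hsub => hwne (by simpa using congrArg Subtype.val hsub)⟩⟩
        exact Module.finrank_pos
      have := Submodule.finrank_sup_add_finrank_inf_eq W U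
      rw [hTop, hWU] at this
      rw [finrank_top] at this
      simp only [finrank_bot] at this
      omega
    obtain ⟨m, wU, njU, SU, hSspec, hSinv, hSint⟩ :=
      ih U aU bU ⟨a'U, hrelU⟩ hbbU r hr n hannU hrankU
    obtain ⟨hSindep, hSsup⟩ :=
      (DirectSum.isInternal_submodule_iff_iSupIndep_and_iSup_eq_top SU).mp hSint
    -- assemble the final decomposition
    refine ⟨m + 1, Fin.cases w (fun j => ((wU j : U) : V)), Fin.cases (d' + 1) njU,
      Fin.cases W (fun j => Submodule.map U.subtype (SU j)), ?_, ?_, ?_⟩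
    · -- span description
      intro j
      induction j using Fin.cases with
      | zero => simpa using hWdef
      | succ l =>
        simp only [Fin.cases_succ]
        rw [hSspec l, Submodule.map_span]
        congr 1
        ext x
        simp only [Set.mem_image, Set.mem_setOf_eq, Submodule.subtype_apply]
        constructor
        · rintro ⟨y, ⟨i, hi, hy | hy⟩, rfl⟩ <;> subst hy <;> refine ⟨i, hi, ?_⟩
          · left
            rw [hNUeq, restrict_pow_coe]
          · right
            rw [hNUeq, restrict_pow_coe, hbUc]
        · rintro ⟨i, hi, hx | hx⟩ <;> subst hx
          · refine ⟨((aU - r • 1) ^ i) (wU l), ⟨i, hi, Or.inl rfl⟩, ?_⟩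
            rw [hNUeq, restrict_pow_coe]
          · refine ⟨((aU - r • 1) ^ i) (bU (wU l)), ⟨i, hi, Or.inr rfl⟩, ?_⟩
            rw [hNUeq, restrict_pow_coe, hbUc]
    · -- invariance
      intro j
      induction j using Fin.cases with
      | zero =>
        simp only [Fin.cases_zero]
        constructor
        · rintro x ⟨y, hy, rfl⟩
          exact haW y hy
        · rintro x ⟨y, hy, rfl⟩
          exact hbW y hy
      | succ l =>
        simp only [Fin.cases_succ]
        constructor
        · rintro x ⟨y, ⟨z, hz, rfl⟩, rfl⟩
          refine ⟨aU z, (hSinv l).1 ⟨z, hz, rfl⟩, ?_⟩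
          simp only [Submodule.subtype_apply, haUc]
        · rintro x ⟨y, ⟨z, hz, rfl⟩, rfl⟩
          refine ⟨bU z, (hSinv l).2 ⟨z, hz, rfl⟩, ?_⟩
          simp only [Submodule.subtype_apply, hbUc]
    · -- internal direct sum
      rw [DirectSum.isInternal_submodule_iff_iSupIndep_and_iSup_eq_top]
      have hmapU : ∀ l : Fin m, Submodule.map U.subtype (SU l) ≤ U := by
        intro l
        rintro x ⟨y, _, rfl⟩
        exact y.2
      constructor
      · -- independence
        intro j
        induction j using Fin.cases with
        | zero =>
          simp only [Fin.cases_zero]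
          have hle : (⨆ (j' : Fin (m + 1)) (_ : j' ≠ 0),
              Fin.cases W (fun l => Submodule.map U.subtype (SU l)) j') ≤ U := by
            refine iSup_le fun j' => iSup_le fun hj' => ?_
            induction j' using Fin.cases with
            | zero => exact absurd rfl hj'
            | succ l => simpa using hmapU l
          exact Disjoint.mono_right hle (disjoint_iff.mpr hWU)
        | succ l =>
          simp only [Fin.cases_succ]
          set Y : Submodule ℝ V := ⨆ (kk : Fin m) (_ : kk ≠ l),
            Submodule.map U.subtype (SU kk) with hYdef
          have hYU : Y ≤ U := by
            refine iSup_le fun kk => iSup_le fun _ => hmapU kk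
          have hYdisj : Disjoint (Submodule.map U.subtype (SU l)) Y := by
            have hmapped : Y = Submodule.map U.subtype (⨆ (kk : Fin m) (_ : kk ≠ l), SU kk) := by
              rw [hYdef, Submodule.map_iSup]
              congr 1
              ext kk
              rw [Submodule.map_iSup]
            rw [hmapped]
            rw [Submodule.disjoint_def]
            rintro x ⟨y, hy, rfl⟩ ⟨y', hy', hyy'⟩
            have : y' = y := Subtype.ext hyy'
            subst this
            have : y' ∈ (⊥ : Submodule ℝ U) := (hSindep l).le_bot ⟨hy, hy'⟩
            simp only [Submodule.mem_bot] at this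
            rw [this]
            simp
          have hle : (⨆ (j' : Fin (m + 1)) (_ : j' ≠ l.succ),
              Fin.cases W (fun l' => Submodule.map U.subtype (SU l')) j') ≤ W ⊔ Y := by
            refine iSup_le fun j' => iSup_le fun hj' => ?_
            induction j' using Fin.cases with
            | zero => simpa using (le_sup_left : W ≤ W ⊔ Y)
            | succ kk =>
              have hkk : kk ≠ l := fun h => hj' (by rw [h])
              simp only [Fin.cases_succ]
              refine le_trans ?_ (le_sup_right : Y ≤ W ⊔ Y)
              rw [hYdef]
              exact le_iSup₂ (f := fun kk _ => Submodule.map U.subtype (SU kk)) kk hkk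
          refine Disjoint.mono_right hle ?_
          rw [Submodule.disjoint_def]
          intro x hx hxWY
          obtain ⟨xw, hxw, xy, hxy, rfl⟩ := Submodule.mem_sup.mp hxWY
          have hxU : xw + xy ∈ U := hmapU l hx
          have hxwU : xw ∈ U := by
            have : xw = (xw + xy) - xy := by module
            rw [this]
            exact sub_mem hxU (hYU hxy)
          have : xw ∈ W ⊓ U := ⟨hxw, hxwU⟩
          rw [hWU] at this
          simp only [Submodule.mem_bot] at this
          subst this
          rw [zero_add] at hx ⊢
          exact hYdisj.le_bot ⟨hx, hxy⟩
      · -- supremum is everything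
        apply le_antisymm le_top
        rw [← hTop]
        refine sup_le ?_ ?_
        · exact le_iSup_of_le 0 (by simp)
        · have : U = Submodule.map U.subtype (⨆ l, SU l) := by
            rw [hSsup, Submodule.map_top, Submodule.range_subtype]
          refine le_trans (le_of_eq this) ?_
          rw [Submodule.map_iSup]
          refine iSup_le fun l => ?_
          exact le_iSup_of_le l.succ (by simp)

/-- If `ba = a⁻¹b`, `b² = -1` and `(a - r)ⁿ = 0` with `r = ±1` on a finite
dimensional real vector space `V`, then `V` is an internal direct sum of
subspaces spanned by `{(a-r)ⁱ w_j, (a-r)ⁱ b w_j : 0 ≤ i < n_j}`, each invariant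
under both `a` and `b`. -/
theorem stmt17 (V : Type*) [AddCommGroup V] [Module ℝ V] [FiniteDimensional ℝ V]
    (a b : Module.End ℝ V)
    (hrel : ∃ a' : Module.End ℝ V, a * a' = 1 ∧ a' * a = 1 ∧ b * a = a' * b)
    (hb : b * b = -1)
    (r : ℝ) (hr : r = 1 ∨ r = -1) (n : ℕ)
    (hann : (a - r • 1) ^ n = 0) :
    ∃ (m : ℕ) (w : Fin m → V) (nj : Fin m → ℕ) (S : Fin m → Submodule ℝ V),
      (∀ j : Fin m, S j = Submodule.span ℝ
        {x : V | ∃ i < nj j,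
          x = ((a - r • 1) ^ i) (w j) ∨ x = ((a - r • 1) ^ i) (b (w j))}) ∧
      (∀ j : Fin m, Submodule.map a (S j) ≤ S j ∧ Submodule.map b (S j) ≤ S j) ∧
      DirectSum.IsInternal S := by
  have h := aux (finrank ℝ V) V a b hrel hb r hr n hann le_rfl
  unfold Concl at h
  exact h
end

section
/- Every finite dimensional irreducible real representation of the algebra with generators a, b and relations bab⁻¹ = a⁻¹, b² = -1 has real dimension 2 or 4. -/
/-!
An endomorphism `a` of a nonzero finite-dimensional real space has a nonzero invariant subspace
`W` of dimension at most 2, spanned by `v, a v` for `v` killed by a quadratic factor of its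
minimal polynomial. As `a` is invertible, `W` is `a⁻¹`-invariant too, and `b a = a⁻¹ b`,
`b² = -1` make `W + b W` invariant under `a` and `b`; irreducibility gives `dim V ≤ 4`.
Finally `(det b)² = det (-1) = (-1) ^ dim V` forces `dim V` to be even.
-/

open Polynomial Module

namespace Module.End

variable {K V : Type*} [Field K] [AddCommGroup V] [Module K V]

theorem exists_ne_zero_aeval_apply_eq_zero {a : End K V} {f g : K[X]}
    (hfg : aeval a (f * g) = 0) (hg : g ≠ 0) (hdeg : g.natDegree < (minpoly K a).natDegree) :
    ∃ v ≠ 0, aeval a f v = 0 := by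
  have hag : aeval a g ≠ 0 := fun h =>
    hdeg.not_ge (natDegree_le_natDegree (minpoly.degree_le_of_ne_zero K a hg h))
  obtain ⟨w, hw⟩ : ∃ w, aeval a g w ≠ 0 := by
    by_contra! h
    exact hag (LinearMap.ext h)
  exact ⟨aeval a g w, hw, by rw [← mul_apply, ← map_mul, hfg, LinearMap.zero_apply]⟩

theorem even_finrank_of_mul_self_eq_neg_one [LinearOrder K] [IsStrictOrderedRing K]
    {J : End K V} (hJ : J * J = -1) : Even (finrank K V) := by
  have hdet : LinearMap.det J * LinearMap.det J = (-1) ^ finrank K V := by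
    rw [← map_mul, hJ, ← neg_one_smul K (1 : End K V), LinearMap.det_smul, map_one, mul_one]
  by_contra hodd
  rw [(Nat.not_even_iff_odd.mp hodd).neg_one_pow] at hdet
  nlinarith [mul_self_nonneg (LinearMap.det J)]

end Module.End

namespace Submodule

variable {K V : Type*} [Field K] [AddCommGroup V] [Module K V]

theorem map_le_of_mul_eq_one {W : Submodule K V} [FiniteDimensional K W] {a a' : End K V}
    (h : a' * a = 1) (hW : W.map a ≤ W) : W.map a' ≤ W := by
  have hinv : ∀ x, a' (a x) = x := fun x => by rw [← End.mul_apply, h, End.one_apply]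
  have hsurj : W.map a = W :=
    eq_of_le_of_finrank_eq hW
      (equivMapOfInjective a (Function.LeftInverse.injective hinv) W).finrank_eq.symm
  rintro _ ⟨x, hx, rfl⟩
  rw [← hsurj] at hx
  obtain ⟨y, hy, rfl⟩ := hx
  rwa [hinv]

variable {W : Submodule K V} {a a' b : End K V}

theorem map_sup_map_le_of_mul_eq_inv_mul (haa' : a * a' = 1) (hba : b * a = a' * b)
    (ha : W.map a ≤ W) (ha' : W.map a' ≤ W) : (W ⊔ W.map b).map a ≤ W ⊔ W.map b := by
  have hab : a * b = b * a' :=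
    calc a * b = a * (b * a) * a' := by rw [mul_assoc, mul_assoc, haa', mul_one]
      _ = b * a' := by rw [hba, ← mul_assoc a a' b, haa', one_mul]
  rw [map_sup, ← map_comp, ← End.mul_eq_comp, hab, End.mul_eq_comp, map_comp]
  exact sup_le_sup ha (map_mono ha')

theorem map_sup_map_le_of_mul_self_eq_neg_one (hbb : b * b = -1) :
    (W ⊔ W.map b).map b ≤ W ⊔ W.map b := by
  rw [map_sup, ← map_comp, ← End.mul_eq_comp, hbb, Submodule.map_neg, End.one_eq_id, map_id,
    sup_comm]

end Submodule

theorem Module.End.exists_invariant_finrank_le_two {V : Type*} [AddCommGroup V] [Module ℝ V]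
    [FiniteDimensional ℝ V] [Nontrivial V] (a : End ℝ V) :
    ∃ W : Submodule ℝ V, W ≠ ⊥ ∧ finrank ℝ W ≤ 2 ∧ W.map a ≤ W := by
  obtain ⟨n, hn⟩ : ∃ n, (minpoly ℝ a).natDegree = n + 1 :=
    Nat.exists_eq_succ_of_ne_zero (minpoly.natDegree_pos (Algebra.IsIntegral.isIntegral a)).ne'
  have hmin : IsMonicOfDegree (minpoly ℝ a) (n + 1) :=
    ⟨hn, minpoly.monic (Algebra.IsIntegral.isIntegral a)⟩
  -- The extra factor `X` guarantees degree `≥ 2`, so that a monic quadratic factor exists.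
  obtain ⟨p, q, hp, hq, hpq⟩ :=
    (hmin.mul (isMonicOfDegree_X ℝ)).eq_isMonicOfDegree_two_mul_isMonicOfDegree
  obtain ⟨c₁, c₀, rfl⟩ := isMonicOfDegree_two_iff.mp hp
  obtain ⟨v, hv, hpv⟩ := exists_ne_zero_aeval_apply_eq_zero (a := a)
    (by rw [← hpq, map_mul, minpoly.aeval, zero_mul]) hq.ne_zero
    (by rw [hq.natDegree_eq, hn]; omega)
  have haav : a (a v) = -c₁ • a v + -c₀ • v := by
    simp only [map_add, map_mul, aeval_C, aeval_X, LinearMap.add_apply, mul_apply, pow_two,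
      algebraMap_end_apply] at hpv
    linear_combination (norm := module) hpv
  set W := Submodule.span ℝ (Set.range ![v, a v])
  have hvW : v ∈ W := Submodule.subset_span ⟨0, rfl⟩
  have havW : a v ∈ W := Submodule.subset_span ⟨1, rfl⟩
  refine ⟨W, ?_, finrank_range_le_card ![v, a v], ?_⟩
  · exact fun h => hv ((Submodule.eq_bot_iff W).mp h v hvW)
  · rw [Submodule.map_span_le, Set.forall_mem_range, Fin.forall_fin_two]
    refine ⟨havW, ?_⟩
    rw [Matrix.cons_val_one, Matrix.cons_val_zero, haav]
    exact add_mem (W.smul_mem _ havW) (W.smul_mem _ hvW)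

/-- Every finite dimensional irreducible real representation of the algebra
generated by `a, b` with `bab⁻¹ = a⁻¹`, `b² = -1` has dimension 2 or 4. -/
theorem stmt18 (V : Type*) [AddCommGroup V] [Module ℝ V] [FiniteDimensional ℝ V]
    [Nontrivial V]
    (a b : Module.End ℝ V)
    (hrel : ∃ a' : Module.End ℝ V, a * a' = 1 ∧ a' * a = 1 ∧ b * a = a' * b)
    (hb : b * b = -1)
    (hirr : ∀ W : Submodule ℝ V,
      Submodule.map a W ≤ W → Submodule.map b W ≤ W → W = ⊥ ∨ W = ⊤) :
    Module.finrank ℝ V = 2 ∨ Module.finrank ℝ V = 4 := by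
  obtain ⟨a', haa', ha'a, hba⟩ := hrel
  obtain ⟨W, hW, hW2, haW⟩ := a.exists_invariant_finrank_le_two
  have ha'W : W.map a' ≤ W := W.map_le_of_mul_eq_one ha'a haW
  have hU : W ⊔ W.map b = ⊤ :=
    (hirr _ (Submodule.map_sup_map_le_of_mul_eq_inv_mul haa' hba haW ha'W)
      (Submodule.map_sup_map_le_of_mul_self_eq_neg_one hb)).resolve_left
      fun h => hW (eq_bot_mono le_sup_left h)
  have hle : finrank ℝ V ≤ 4 :=
    calc finrank ℝ V = finrank ℝ ↥(W ⊔ W.map b) := by rw [hU, finrank_top]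
      _ ≤ finrank ℝ W + finrank ℝ (W.map b) :=
        Submodule.finrank_add_le_finrank_add_finrank _ _
      _ ≤ 2 + 2 := add_le_add hW2 ((Submodule.finrank_map_le b W).trans hW2)
  obtain ⟨k, hk⟩ := Module.End.even_finrank_of_mul_self_eq_neg_one hb
  have hpos : 0 < finrank ℝ V := finrank_pos
  omega
end
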